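/- Let Φ be a non-uniform random k-SAT formula on n variables with m clauses and suppose q_max = o(1) as n → ∞. Then: (i) if m = Θ(q_max^{-1}), the probability that Φ is unsatisfiable is Ω(1); and (ii) if m = ω(q_max^{-1}), the probability that Φ is unsatisfiable is 1 − o(1). -/

import Mathlib

/-!
Split the `m` clauses into `2^k` blocks of `⌊m/2^k⌋` clauses, one block for each sign pattern `s`
on the `k` most probable variables. If every block contains the clause over these variables with
signs `s`, all `2^k` clauses on them are present and the formula is unsatisfiable. The blocks are
independent, and one ordered clause over the top `k` variables has probability `q_max / k!`, so
`P(unsat) ≥ (1 - (1 - q_max/k!)^⌊m/2^k⌋)^(2^k) ≥ (1 - exp(-q_max ⌊m/2^k⌋ / k!))^(2^k)`.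
As `q_max → 0`, the exponent `q_max ⌊m/2^k⌋` is bounded away from `0` when `m = Θ(1/q_max)` and
tends to infinity when `m = ω(1/q_max)`.
-/

open Finset Filter Asymptotics

open scoped Classical

/-- The probability of drawing a given ordered k-clause (a tuple of `k` literals over
pairwise distinct variables); an unordered k-clause over a variable set `J` then has total
probability `(∏_{j∈J} pⱼ) / (2^k · ∑_{|J'|=k} ∏_{j∈J'} pⱼ)`. -/
noncomputable def clauseProbK (n k : ℕ) (p : ℕ → ℝ) (c : Fin k → Fin n × Bool) : ℝ :=
  if Function.Injective fun i => (c i).1 then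
    (∏ i, p ((c i).1 : ℕ)) /
      (2 ^ k * (Nat.factorial k) *
        ∑ J ∈ Finset.powersetCard k (Finset.range n), ∏ j ∈ J, p j)
  else 0

/-- The probability of drawing a given k-CNF formula: `m` clauses drawn independently. -/
noncomputable def formulaProbK (n m k : ℕ) (p : ℕ → ℝ)
    (Φ : Fin m → Fin k → Fin n × Bool) : ℝ :=
  ∏ j, clauseProbK n k p (Φ j)

/-- Satisfiability of a k-CNF formula: a literal `(x, b)` is satisfied by `a` iff `a x = b`. -/
def SatK {n m k : ℕ} (Φ : Fin m → Fin k → Fin n × Bool) : Prop :=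
  ∃ a : Fin n → Bool, ∀ j, ∃ i, a (Φ j i).1 = (Φ j i).2

/-- The probability that a non-uniform random k-SAT formula is unsatisfiable. -/
noncomputable def probUnsatK (n m k : ℕ) (p : ℕ → ℝ) : ℝ :=
  ∑ Φ : Fin m → Fin k → Fin n × Bool,
    if ¬ SatK Φ then formulaProbK n m k p Φ else 0

/-- The maximum clause probability: for a decreasingly sorted distribution `p` this is the
probability of a clause over the `k` most probable variables,
`q_max = (∏_{j<k} pⱼ) / (2^k · ∑_{|J'|=k} ∏_{j∈J'} pⱼ)`. -/
noncomputable def qmaxK (n k : ℕ) (p : ℕ → ℝ) : ℝ :=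
  (∏ j ∈ Finset.range k, p j) /
    (2 ^ k * ∑ J ∈ Finset.powersetCard k (Finset.range n), ∏ j ∈ J, p j)

/-- `p n` is a probability vector on `n` variables (indexed `0,…,n-1`), sorted decreasingly,
with all entries positive. -/
def ProbEnsemble (p : ℕ → ℕ → ℝ) : Prop :=
  ∀ n, 1 ≤ n →
    (∑ i ∈ Finset.range n, p n i = 1) ∧
    (∀ i j, i ≤ j → j < n → p n j ≤ p n i) ∧
    (∀ i, i < n → 0 < p n i)

open Real Topology
open scoped Nat

section Counting

variable {α : Type*} [Fintype α] [DecidableEq α] {k : ℕ}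

def embeddingWithImageEquiv (J : Finset α) (hJ : #J = k) :
    {f : Fin k ↪ α // univ.map f = J} ≃ (Fin k ↪ J) where
  toFun f := ⟨fun i => ⟨f.1 i, f.2.subset (mem_map_of_mem _ (mem_univ i))⟩,
    fun _ _ h => f.1.injective (congrArg Subtype.val h)⟩
  invFun e := ⟨e.trans (Function.Embedding.subtype _), by
    refine eq_of_subset_of_card_le (fun x hx => ?_) ?_
    · obtain ⟨i, -, rfl⟩ := Finset.mem_map.1 hx
      exact (e i).2
    · simp [hJ]⟩
  left_inv f := by ext; rfl
  right_inv e := by ext; rfl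

lemma card_embedding_map_univ_eq (J : Finset α) (hJ : #J = k) :
    #{f : Fin k ↪ α | univ.map f = J} = k ! := by
  rw [← Fintype.card_subtype, Fintype.card_congr (embeddingWithImageEquiv J hJ),
    Fintype.card_embedding_eq, Fintype.card_coe, hJ, Fintype.card_fin, Nat.descFactorial_self]

lemma sum_embedding_prod_eq {R : Type*} [CommSemiring R] (g : α → R) :
    ∑ f : Fin k ↪ α, ∏ i, g (f i) = k ! * ∑ J ∈ powersetCard k univ, ∏ j ∈ J, g j := by
  have hmaps : ∀ f ∈ (univ : Finset (Fin k ↪ α)), univ.map f ∈ powersetCard k univ := by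
    simp
  rw [← sum_fiberwise_of_maps_to hmaps, mul_sum]
  refine sum_congr rfl fun J hJ => ?_
  rw [sum_congr rfl fun f hf => by rw [← prod_map univ f g, (mem_filter.1 hf).2], sum_const,
    card_embedding_map_univ_eq J (mem_powersetCard.1 hJ).2, nsmul_eq_mul]

end Counting

section ClauseDistribution

variable {n k : ℕ} {p : ℕ → ℝ}

lemma sum_powersetCard_univ_fin_eq {R : Type*} [CommSemiring R] (g : ℕ → R) :
    ∑ J ∈ powersetCard k (univ : Finset (Fin n)), ∏ j ∈ J, g j
      = ∑ J ∈ powersetCard k (range n), ∏ j ∈ J, g j := by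
  rw [← Nat.Iio_eq_range, ← Fin.map_valEmbedding_univ, powersetCard_map, sum_map]
  simp

lemma sum_injective_prod_eq {R : Type*} [CommSemiring R] (g : ℕ → R) :
    ∑ f : Fin k → Fin n, (if Function.Injective f then ∏ i, g (f i) else 0)
      = k ! * ∑ J ∈ powersetCard k (range n), ∏ j ∈ J, g j := by
  rw [← sum_powersetCard_univ_fin_eq, ← sum_embedding_prod_eq, ← sum_filter,
    sum_subtype _ fun f => by rw [mem_filter, and_iff_right (mem_univ f)]]
  exact Fintype.sum_equiv (Equiv.subtypeInjectiveEquivEmbedding _ _) _ _ fun _ => rfl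

lemma sum_powersetCard_prod_pos (hkn : k ≤ n) (hp : ∀ i < n, 0 < p i) :
    0 < ∑ J ∈ powersetCard k (range n), ∏ j ∈ J, p j := by
  refine sum_pos (fun J hJ => prod_pos fun j hj => hp j ?_) ⟨range k, ?_⟩
  · exact mem_range.1 ((mem_powersetCard.1 hJ).1 hj)
  · exact mem_powersetCard.2 ⟨range_subset_range.2 hkn, card_range k⟩

lemma sum_clauseProbK (hkn : k ≤ n) (hp : ∀ i < n, 0 < p i) :
    ∑ c, clauseProbK n k p c = 1 := by
  set σ := ∑ J ∈ powersetCard k (range n), ∏ j ∈ J, p j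
  have hσ : 0 < σ := sum_powersetCard_prod_pos hkn hp
  let G : (Fin k → Fin n) → ℝ := fun f => if Function.Injective f then ∏ i, p (f i) else 0
  have hG : ∀ c, clauseProbK n k p c = G (fun i => (c i).1) / (2 ^ k * k ! * σ) := fun c => by
    simp only [G, ite_div, zero_div]
    rfl
  calc ∑ c, clauseProbK n k p c
      = (∑ fs : (Fin k → Fin n) × (Fin k → Bool), G fs.1) / (2 ^ k * k ! * σ) := by
        rw [sum_congr rfl fun c _ => hG c, ← sum_div]
        congr 1
        exact Fintype.sum_equiv (Equiv.arrowProdEquivProdArrow _ _ _) _ _ fun _ => rfl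
    _ = 1 := by
      simp only [Fintype.sum_prod_type_right, sum_const, card_univ, Fintype.card_fun,
        Fintype.card_bool, Fintype.card_fin, nsmul_eq_mul, G, sum_injective_prod_eq]
      rw [div_eq_one_iff_eq (by positivity)]
      push_cast
      ring

end ClauseDistribution

section IID

variable {ι κ C : Type*} [Fintype ι] [DecidableEq ι] [Fintype κ] [DecidableEq κ] [Fintype C]
  (w : C → ℝ)

/-- The probability that a sample `ψ : ι → C` with i.i.d. coordinates of law `w` satisfies `P`. -/
noncomputable def iidProb (P : (ι → C) → Prop) : ℝ :=
  ∑ ψ : ι → C, if P ψ then ∏ i, w (ψ i) else 0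

lemma sum_prod_eq_sum_pow : ∑ v : ι → C, ∏ i, w (v i) = (∑ c, w c) ^ Fintype.card ι := by
  rw [← Fintype.prod_sum, prod_const, card_univ]

variable {w}

lemma iidProb_true : iidProb w (fun _ : ι → C => True) = (∑ c, w c) ^ Fintype.card ι := by
  simp only [iidProb, if_true, sum_prod_eq_sum_pow]

lemma iidProb_mono (hw : 0 ≤ w) {P Q : (ι → C) → Prop} (h : ∀ ψ, P ψ → Q ψ) :
    iidProb w P ≤ iidProb w Q := by
  refine sum_le_sum fun ψ _ => ?_
  split_ifs with hP hQ
  · exact le_rfl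
  · exact absurd (h ψ hP) hQ
  · exact prod_nonneg fun i _ => hw (ψ i)
  · exact le_rfl

lemma iidProb_le_one (hw : 0 ≤ w) (hw1 : ∑ c, w c = 1) (P : (ι → C) → Prop) :
    iidProb w P ≤ 1 :=
  (iidProb_mono hw fun _ _ => trivial).trans_eq (by rw [iidProb_true, hw1, one_pow])

lemma iidProb_not (hw1 : ∑ c, w c = 1) (P : (ι → C) → Prop) :
    iidProb w (fun ψ => ¬ P ψ) = 1 - iidProb w P := by
  have hsplit : iidProb w (fun ψ => ¬ P ψ) + iidProb w P = iidProb w fun _ : ι → C => True := by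
    rw [iidProb, iidProb, iidProb, ← sum_add_distrib]
    refine sum_congr rfl fun ψ _ => ?_
    by_cases h : P ψ <;> simp [h]
  rw [eq_sub_iff_add_eq, hsplit, iidProb_true, hw1, one_pow]

lemma iidProb_forall (P : ι → C → Prop) [∀ i, DecidablePred (P i)] :
    iidProb w (fun ψ => ∀ i, P i (ψ i)) = ∏ i, ∑ c, if P i c then w c else 0 := by
  simp only [iidProb, Fintype.prod_sum, Fintype.prod_ite_zero]
  congr! 2

lemma iidProb_exists_eq (hw1 : ∑ c, w c = 1) (c₀ : C) :
    iidProb w (fun ψ : ι → C => ∃ i, ψ i = c₀) = 1 - (1 - w c₀) ^ Fintype.card ι := by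
  have hmiss : ∑ c, (if c ≠ c₀ then w c else 0) = 1 - w c₀ := by
    simp [← hw1, sum_ite, filter_ne']
  have hnot : (fun ψ : ι → C => ∃ i, ψ i = c₀) = fun ψ => ¬ ∀ i, ψ i ≠ c₀ := by
    simp only [ne_eq, not_forall, not_not]
  rw [hnot, iidProb_not hw1, iidProb_forall fun _ c => c ≠ c₀, hmiss, prod_const, card_univ]

lemma iidProb_uncurry (P : (ι × κ → C) → Prop) :
    iidProb w P = iidProb (fun v : κ → C => ∏ r, w (v r)) (fun ψ => P (Function.uncurry ψ)) := by
  unfold iidProb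
  exact Fintype.sum_equiv (Equiv.curry ι κ C) _ _ fun ψ => by
    simp only [Fintype.prod_prod_type]
    rfl

lemma iidProb_forall_blocks (Q : ι → (κ → C) → Prop) :
    iidProb w (fun ψ : ι × κ → C => ∀ i, Q i fun r => ψ (i, r)) = ∏ i, iidProb w (Q i) := by
  rw [iidProb_uncurry]
  exact iidProb_forall Q

lemma iidProb_comp_inl (hw1 : ∑ c, w c = 1) (P : (ι → C) → Prop) :
    iidProb w (fun Ψ : ι ⊕ κ → C => P (Ψ ∘ Sum.inl)) = iidProb w P := by
  calc iidProb w (fun Ψ : ι ⊕ κ → C => P (Ψ ∘ Sum.inl))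
      = ∑ uv : (ι → C) × (κ → C), (if P uv.1 then ∏ i, w (uv.1 i) else 0) * ∏ j, w (uv.2 j) :=
        Fintype.sum_equiv (Equiv.sumArrowEquivProdArrow ι κ C) _ _ fun Ψ => by
          rw [Fintype.prod_sum_type, ite_mul, zero_mul]
          rfl
    _ = iidProb w P * ∑ v : κ → C, ∏ j, w (v j) := by
        rw [Fintype.sum_prod_type, iidProb, sum_mul_sum]
    _ = iidProb w P := by rw [sum_prod_eq_sum_pow, hw1, one_pow, mul_one]

lemma iidProb_comp_equiv (e : ι ≃ κ) (P : (ι → C) → Prop) :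
    iidProb w (fun Φ : κ → C => P (Φ ∘ e)) = iidProb w P :=
  Fintype.sum_equiv (e.symm.arrowCongr (Equiv.refl C)) _ _ fun Φ => by
    rw [← e.prod_comp]
    rfl

lemma iidProb_comp_embedding (hw1 : ∑ c, w c = 1) (f : ι ↪ κ) (P : (ι → C) → Prop) :
    iidProb w (fun Φ : κ → C => P (Φ ∘ f)) = iidProb w P := by
  let e : ι ⊕ {x // x ∉ Set.range f} ≃ κ :=
    ((Equiv.ofInjective f f.injective).sumCongr (Equiv.refl _)).trans
      (Equiv.sumCompl (· ∈ Set.range f))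
  calc iidProb w (fun Φ : κ → C => P (Φ ∘ f))
      = iidProb w (fun Φ : κ → C => P (Φ ∘ e ∘ Sum.inl)) := rfl
    _ = iidProb w (fun Ψ : ι ⊕ {x // x ∉ Set.range f} → C => P (Ψ ∘ Sum.inl)) :=
        iidProb_comp_equiv e fun Ψ => P (Ψ ∘ Sum.inl)
    _ = iidProb w P := iidProb_comp_inl hw1 P

end IID

section KSat

variable {n m k : ℕ} {p : ℕ → ℝ}

lemma qmaxK_pos (hkn : k ≤ n) (hp : ∀ i < n, 0 < p i) : 0 < qmaxK n k p := by
  have := sum_powersetCard_prod_pos hkn hp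
  have : 0 < ∏ j ∈ range k, p j := prod_pos fun j hj => hp j ((mem_range.1 hj).trans_le hkn)
  unfold qmaxK
  positivity

lemma clauseProbK_nonneg (hkn : k ≤ n) (hp : ∀ i < n, 0 < p i) : 0 ≤ clauseProbK n k p := by
  intro c
  have := sum_powersetCard_prod_pos hkn hp
  have : 0 ≤ ∏ i, p (c i).1 := prod_nonneg fun i _ => (hp _ (c i).1.2).le
  unfold clauseProbK
  split_ifs <;> positivity

lemma probUnsatK_eq_iidProb :
    probUnsatK n m k p = iidProb (clauseProbK n k p) (fun Φ : Fin m → _ => ¬ SatK Φ) := by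
  unfold probUnsatK iidProb formulaProbK
  congr!

lemma probUnsatK_le_one (hkn : k ≤ n) (hp : ∀ i < n, 0 < p i) : probUnsatK n m k p ≤ 1 := by
  rw [probUnsatK_eq_iidProb]
  exact iidProb_le_one (clauseProbK_nonneg hkn hp) (sum_clauseProbK hkn hp) _

def leadingClause (hkn : k ≤ n) (s : Fin k → Bool) : Fin k → Fin n × Bool :=
  fun i => (Fin.castLE hkn i, s i)

lemma clauseProbK_leadingClause (hkn : k ≤ n) (s : Fin k → Bool) :
    clauseProbK n k p (leadingClause hkn s) = qmaxK n k p / k ! := by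
  have hinj : Function.Injective fun i => (leadingClause hkn s i).1 := Fin.castLE_injective hkn
  rw [clauseProbK, if_pos hinj, qmaxK, div_div, mul_right_comm]
  congr 1
  exact Fin.prod_univ_eq_prod_range (fun j => p j) k

lemma not_satK_of_forall_leadingClause (hkn : k ≤ n) {Φ : Fin m → Fin k → Fin n × Bool}
    (h : ∀ s, ∃ j, Φ j = leadingClause hkn s) : ¬ SatK Φ := by
  rintro ⟨a, ha⟩
  obtain ⟨j, hj⟩ := h fun i => !a (Fin.castLE hkn i)
  obtain ⟨i, hi⟩ := ha j
  simp [hj, leadingClause] at hi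

lemma one_sub_one_sub_pow_pow_le_probUnsatK (hkn : k ≤ n) (hp : ∀ i < n, 0 < p i) :
    (1 - (1 - qmaxK n k p / k !) ^ (m / 2 ^ k)) ^ 2 ^ k ≤ probUnsatK n m k p := by
  set t := m / 2 ^ k
  set w := clauseProbK n k p
  have hw1 : ∑ c, w c = 1 := sum_clauseProbK hkn hp
  obtain ⟨ι⟩ : Nonempty ((Fin k → Bool) × Fin t ↪ Fin m) :=
    Function.Embedding.nonempty_of_card_le (by simpa [t] using Nat.mul_div_le m (2 ^ k))
  calc (1 - (1 - qmaxK n k p / k !) ^ t) ^ 2 ^ k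
      = ∏ s : Fin k → Bool, iidProb w (fun v : Fin t → _ => ∃ r, v r = leadingClause hkn s) := by
        simp [iidProb_exists_eq hw1, w, clauseProbK_leadingClause]
    _ = iidProb w
          (fun ψ : (Fin k → Bool) × Fin t → _ => ∀ s, ∃ r, ψ (s, r) = leadingClause hkn s) :=
        (iidProb_forall_blocks _).symm
    _ = iidProb w (fun Φ : Fin m → _ => ∀ s, ∃ r, Φ (ι (s, r)) = leadingClause hkn s) :=
        (iidProb_comp_embedding hw1 ι _).symm
    _ ≤ iidProb w (fun Φ => ¬ SatK Φ) :=
        iidProb_mono (clauseProbK_nonneg hkn hp) fun Φ h =>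
          not_satK_of_forall_leadingClause hkn fun s =>
            let ⟨r, hr⟩ := h s; ⟨ι (s, r), hr⟩
    _ = probUnsatK n m k p := probUnsatK_eq_iidProb.symm

lemma one_sub_exp_pow_le_probUnsatK (hkn : k ≤ n) (hp : ∀ i < n, 0 < p i) :
    (1 - exp (-(qmaxK n k p * (m / 2 ^ k : ℕ) / k !))) ^ 2 ^ k ≤ probUnsatK n m k p := by
  have hq := qmaxK_pos hkn hp
  have hQ1 : qmaxK n k p / k ! ≤ 1 := by
    rw [← clauseProbK_leadingClause hkn fun _ => true, ← sum_clauseProbK hkn hp]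
    exact single_le_sum (fun c _ => clauseProbK_nonneg hkn hp c) (mem_univ _)
  have hexp : (1 - qmaxK n k p / k !) ^ (m / 2 ^ k)
      ≤ exp (-(qmaxK n k p * (m / 2 ^ k : ℕ) / k !)) :=
    calc (1 - qmaxK n k p / k !) ^ (m / 2 ^ k)
        ≤ exp (-(qmaxK n k p / k !)) ^ (m / 2 ^ k) :=
          pow_le_pow_left₀ (sub_nonneg.2 hQ1) (one_sub_le_exp_neg _) _
      _ = exp (-(qmaxK n k p * (m / 2 ^ k : ℕ) / k !)) := by
          rw [← exp_nat_mul]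
          ring_nf
  refine le_trans (pow_le_pow_left₀ ?_ (sub_le_sub_left hexp 1) _)
    (one_sub_one_sub_pow_pow_le_probUnsatK hkn hp)
  exact sub_nonneg.2 (exp_le_one_iff.2 (neg_nonpos.2 (by positivity)))

end KSat

section Asymptotics

variable {α : Type*} {l : Filter α} {q : α → ℝ} {m : α → ℕ}

lemma sub_one_le_natCast_div (m d : ℕ) : (m : ℝ) / d - 1 ≤ (m / d : ℕ) := by
  rw [← Nat.floor_div_eq_div (K := ℝ)]
  exact (Nat.sub_one_lt_floor _).le

lemma mul_div_sub_le_mul_natCast_div {q : ℝ} (hq : 0 ≤ q) (m d : ℕ) :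
    q * m / d - q ≤ q * (m / d : ℕ) := by
  have := mul_le_mul_of_nonneg_left (sub_one_le_natCast_div m d) hq
  rwa [mul_sub, mul_one, ← mul_div_assoc] at this

lemma exists_pos_eventually_le_mul_of_isBigO_inv (hq0 : ∀ᶠ x in l, 0 < q x)
    (h : (fun x => (q x)⁻¹) =O[l] fun x => (m x : ℝ)) :
    ∃ b > 0, ∀ᶠ x in l, b ≤ q x * m x := by
  have h1 : (fun _ => (1 : ℝ)) =O[l] fun x => q x * m x :=
    ((isBigO_refl q l).mul h).congr' (hq0.mono fun x hx => mul_inv_cancel₀ hx.ne') .rfl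
  obtain ⟨b, hb, hle⟩ := (isBigO_const_left_iff_pos_le_norm one_ne_zero).1 h1
  refine ⟨b, hb, (hle.and hq0).mono fun x ⟨hx, hqx⟩ => ?_⟩
  rwa [norm_of_nonneg (by positivity)] at hx

lemma tendsto_mul_atTop_of_isLittleO_inv (hq0 : ∀ᶠ x in l, 0 < q x)
    (h : (fun x => (q x)⁻¹) =o[l] fun x => (m x : ℝ)) :
    Tendsto (fun x => q x * m x) l atTop := by
  have h1 : (fun _ => (1 : ℝ)) =o[l] fun x => q x * m x :=
    ((isBigO_refl q l).mul_isLittleO h).congr' (hq0.mono fun x hx => mul_inv_cancel₀ hx.ne') .rfl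
  exact (isLittleO_one_left_iff ℝ).1 h1 |>.congr'
    (hq0.mono fun x hx => norm_of_nonneg (by positivity))

lemma exists_pos_eventually_le_mul_natCast_div (hq : Tendsto q l (𝓝 0))
    (hq0 : ∀ᶠ x in l, 0 < q x) (h : (fun x => (q x)⁻¹) =O[l] fun x => (m x : ℝ))
    {d : ℕ} (hd : 0 < d) : ∃ a > 0, ∀ᶠ x in l, a ≤ q x * (m x / d : ℕ) := by
  obtain ⟨b, hb, hle⟩ := exists_pos_eventually_le_mul_of_isBigO_inv hq0 h
  have hb' : 0 < b / (2 * d) := by positivity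
  refine ⟨b / (2 * d), hb', ?_⟩
  filter_upwards [hle, hq0, hq.eventually (ge_mem_nhds hb')] with x hbx hqx hsmall
  calc b / (2 * d) = b / d - b / (2 * d) := by field_simp; ring
    _ ≤ q x * m x / d - q x := by gcongr
    _ ≤ q x * (m x / d : ℕ) := mul_div_sub_le_mul_natCast_div hqx.le _ _

lemma tendsto_mul_natCast_div_atTop (hq : Tendsto q l (𝓝 0)) (hq0 : ∀ᶠ x in l, 0 < q x)
    (h : (fun x => (q x)⁻¹) =o[l] fun x => (m x : ℝ)) {d : ℕ} (hd : 0 < d) :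
    Tendsto (fun x => q x * (m x / d : ℕ)) l atTop := by
  refine tendsto_atTop_mono' l (hq0.mono fun x hx => mul_div_sub_le_mul_natCast_div hx.le _ _) ?_
  have hqm := (tendsto_mul_atTop_of_isLittleO_inv hq0 h).atTop_div_const (Nat.cast_pos.2 hd)
  simpa [sub_eq_add_neg] using hqm.atTop_add hq.neg

end Asymptotics

lemma ProbEnsemble.eventually_pos {p : ℕ → ℕ → ℝ} (hp : ProbEnsemble p) (k : ℕ) :
    ∀ᶠ n in atTop, k ≤ n ∧ ∀ i < n, 0 < p n i := by
  filter_upwards [eventually_ge_atTop k, eventually_ge_atTop 1] with n hkn hn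
  exact ⟨hkn, (hp n hn).2.2⟩

theorem nonuniform_kSAT_unsat_around_qmax_general
    (k : ℕ) (p : ℕ → ℕ → ℝ) (hp : ProbEnsemble p)
    (hq : Tendsto (fun n => qmaxK n k (p n)) atTop (nhds 0)) :
    (∀ m : ℕ → ℕ,
      (fun n => (m n : ℝ)) =Θ[atTop] (fun n => (qmaxK n k (p n))⁻¹) →
      ∃ δ : ℝ, 0 < δ ∧ ∀ᶠ n in atTop, δ ≤ probUnsatK n (m n) k (p n)) ∧
    (∀ m : ℕ → ℕ,
      (fun n => (qmaxK n k (p n))⁻¹) =o[atTop] (fun n => (m n : ℝ)) →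
      Tendsto (fun n => probUnsatK n (m n) k (p n)) atTop (nhds 1)) := by
  have hpos := hp.eventually_pos k
  have hq0 : ∀ᶠ n in atTop, 0 < qmaxK n k (p n) := hpos.mono fun n h => qmaxK_pos h.1 h.2
  have hlow (m : ℕ → ℕ) : ∀ᶠ n in atTop,
      (1 - exp (-(qmaxK n k (p n) * (m n / 2 ^ k : ℕ) / k !))) ^ 2 ^ k
        ≤ probUnsatK n (m n) k (p n) :=
    hpos.mono fun n h => one_sub_exp_pow_le_probUnsatK h.1 h.2
  refine ⟨fun m hm => ?_, fun m hm => ?_⟩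
  · obtain ⟨a, ha, hle⟩ := exists_pos_eventually_le_mul_natCast_div hq hq0 hm.2 (pow_pos two_pos k)
    have h0 : 0 < 1 - exp (-(a / k !)) :=
      sub_pos.2 (exp_lt_one_iff.2 (neg_neg_of_pos (by positivity)))
    refine ⟨(1 - exp (-(a / k !))) ^ 2 ^ k, pow_pos h0 _, ?_⟩
    filter_upwards [hle, hlow m] with n hn hlown
    refine le_trans (pow_le_pow_left₀ h0.le ?_ _) hlown
    gcongr
  · have hx := tendsto_mul_natCast_div_atTop hq hq0 hm (pow_pos two_pos k)
    have hlim : Tendsto (fun n => (1 - exp (-(qmaxK n k (p n) * (m n / 2 ^ k : ℕ) / k !))) ^ 2 ^ k)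
        atTop (𝓝 1) := by
      simpa using ((tendsto_exp_neg_atTop_nhds_zero.comp
        (hx.atTop_div_const (by positivity))).const_sub 1).pow (2 ^ k)
    exact tendsto_of_tendsto_of_tendsto_of_le_of_le' hlim tendsto_const_nhds (hlow m)
      (hpos.mono fun n h => probUnsatK_le_one h.1 h.2)

/-- For non-uniform random k-SAT with `q_max = o(1)`: (i) if `m = Θ(q_max⁻¹)` then the
formula is unsatisfiable with probability `Ω(1)`; (ii) if `m = ω(q_max⁻¹)` then it is
unsatisfiable with probability `1 - o(1)`. -/
theorem nonuniform_kSAT_unsat_around_qmax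
    (k : ℕ) (hk : 2 ≤ k) (p : ℕ → ℕ → ℝ) (hp : ProbEnsemble p)
    (hq : Tendsto (fun n => qmaxK n k (p n)) atTop (nhds 0)) :
    (∀ m : ℕ → ℕ,
      (fun n => (m n : ℝ)) =Θ[atTop] (fun n => (qmaxK n k (p n))⁻¹) →
      ∃ δ : ℝ, 0 < δ ∧ ∀ᶠ n in atTop, δ ≤ probUnsatK n (m n) k (p n)) ∧
    (∀ m : ℕ → ℕ,
      (fun n => (qmaxK n k (p n))⁻¹) =o[atTop] (fun n => (m n : ℝ)) →
      Tendsto (fun n => probUnsatK n (m n) k (p n)) atTop (nhds 1)) :=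
  nonuniform_kSAT_unsat_around_qmax_general k p hp hq
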